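/- In the setup (G centerless, f, h : G → Aut(G) with h(σ) = conj(g(σ))∘f(σ), g a bijection satisfying g(στ) = g(σ)·f(σ)(g(τ)), and N = {ρ(g(σ))∘f(σ) : σ ∈ G} a normal subgroup of Hol(G)), suppose moreover that π ∈ Perm(G) satisfies N = πλ(G)π⁻¹ and that the normalizer of N in Perm(G) equals Hol(G). If g(ker(f)) ⊆ ker(f) and g(ker(h)) ⊆ ker(h), then π² ∈ Hol(G). -/

import Mathlib

/-- The left regular representation `λ : G →* Perm G`, `λ(σ)(x) = σ·x`. -/
def lambda (G : Type*) [Group G] : G →* Equiv.Perm G where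
  toFun σ := Equiv.mulLeft σ
  map_one' := by ext x; simp
  map_mul' σ τ := by ext x; simp [mul_assoc]

/-- The right regular representation `ρ : G →* Perm G`, `ρ(σ)(x) = x·σ⁻¹`. -/
def rho (G : Type*) [Group G] : G →* Equiv.Perm G where
  toFun σ := Equiv.mulRight σ⁻¹
  map_one' := by ext x; simp
  map_mul' σ τ := by ext x; simp [mul_assoc]

/-- The holomorph `Hol(G)`: the normalizer of `λ(G)` in `Perm G`. -/
def Hol (G : Type*) [Group G] : Subgroup (Equiv.Perm G) :=
  Subgroup.normalizer ((lambda G).range : Set (Equiv.Perm G))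

/-!
Write `p x = (g x)⁻¹`. The crossed-homomorphism identity for `g` says exactly that
`p λ(σ) p⁻¹ = ρ(g σ) f(σ)`, so `N = p λ(G) p⁻¹ = π λ(G) π⁻¹`. Hence `p⁻¹ π` normalizes `λ(G)`,
and conjugation by `p` maps `Hol(G)`, the normalizer of `λ(G)`, onto the normalizer of `N`,
which is `Hol(G)` again; so `π p⁻¹ ∈ Hol(G)` as well. As `π² = (π p⁻¹) p² (p⁻¹ π)`, it remains to
see that `p² : x ↦ g((g x)⁻¹)⁻¹` is an automorphism of `G`, and this follows from the
intertwining relation `g ∘ h(σ) = h(g σ) ∘ g`.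

Normality of `N` under `λ(G)` and `ρ(G)` gives `f(σ)(τ) ∈ g(ker h) τ` and `τ ∈ g(ker f) h(σ)(τ)`.
Together with `g(ker f) ⊆ ker f` and `g(ker h) ⊆ ker h` this shows that the two sides of the
intertwining relation have the same image under `f` and under `h`; they are therefore equal,
since `ker f ∩ ker h = 1` when `G` is centerless.
-/

open Equiv

section Holomorph

variable {G : Type*} [Group G]

@[simp]
lemma lambda_apply (σ x : G) : lambda G σ x = σ * x := rfl

@[simp]
lemma lambda_symm_apply (σ x : G) : (lambda G σ).symm x = σ⁻¹ * x := rfl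

@[simp]
lemma rho_apply (σ x : G) : rho G σ x = x * σ⁻¹ := rfl

@[simp]
lemma rho_symm_apply (σ x : G) : (rho G σ).symm x = x * σ := by
  rw [Equiv.symm_apply_eq]; simp

lemma lambda_mem_Hol (σ : G) : lambda G σ ∈ Hol G :=
  Subgroup.le_normalizer ⟨σ, rfl⟩

lemma mem_Hol_of_conj_lambda_eq {p : Perm G} {φ : G → G} (hφ : Function.Surjective φ)
    (hp : ∀ σ, p * lambda G σ * p⁻¹ = lambda G (φ σ)) : p ∈ Hol G := by
  refine Subgroup.mem_normalizer_iff.2 fun q => ⟨?_, ?_⟩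
  · rintro ⟨σ, rfl⟩
    exact ⟨φ σ, (hp σ).symm⟩
  · rintro ⟨τ, hτ⟩
    obtain ⟨σ, rfl⟩ := hφ τ
    refine ⟨σ, (MulAut.conj p).injective ?_⟩
    simp only [MulAut.conj_apply, hp, hτ]

lemma rho_mem_Hol (τ : G) : rho G τ ∈ Hol G :=
  mem_Hol_of_conj_lambda_eq Function.surjective_id fun σ => by
    rw [mul_inv_eq_iff_eq_mul]; ext; simp [mul_assoc]

lemma MulAut.toPerm_mem_Hol (α : MulAut G) : MulAut.toPerm G α ∈ Hol G :=
  mem_Hol_of_conj_lambda_eq α.surjective fun σ => by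
    rw [mul_inv_eq_iff_eq_mul]; ext x; exact map_mul α σ x

end Holomorph

lemma Subgroup.inv_mul_mem_normalizer_of_map_conj_eq {P : Type*} [Group P] {H : Subgroup P}
    {a b : P} (hab : H.map (MulAut.conj a).toMonoidHom = H.map (MulAut.conj b).toMonoidHom) :
    a⁻¹ * b ∈ Subgroup.normalizer (H : Set P) := by
  refine Subgroup.mem_normalizer_iff.2 fun n => ?_
  have hb : n ∈ H ↔ b * n * b⁻¹ ∈ H.map (MulAut.conj b).toMonoidHom := by
    simp [mul_assoc]
  rw [hb, ← hab, Subgroup.mem_map_equiv]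
  simp [mul_assoc]

section CrossedHom

variable {G : Type*} [Group G] {f h : G →* MulAut G} {g : Perm G}

def IsCrossedHom (f : G →* MulAut G) (g : G → G) : Prop :=
  ∀ σ τ, g (σ * τ) = g σ * f σ (g τ)

def cocyclePerm (f : G →* MulAut G) (g : Perm G) (σ : G) : Perm G :=
  rho G (g σ) * MulAut.toPerm G (f σ)

def HolNormalizes (f : G →* MulAut G) (g : Perm G) : Prop :=
  ∀ x ∈ Hol G, ∀ σ, ∃ σ', x * cocyclePerm f g σ * x⁻¹ = cocyclePerm f g σ'

@[simp]
lemma cocyclePerm_apply (σ x : G) : cocyclePerm f g σ x = f σ x * (g σ)⁻¹ := rfl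

lemma conj_lambda_eq_cocyclePerm (hrel : IsCrossedHom f g) (σ : G) :
    g.trans (Equiv.inv G) * lambda G σ * (g.trans (Equiv.inv G))⁻¹ = cocyclePerm f g σ := by
  rw [mul_inv_eq_iff_eq_mul]
  ext x
  simp [hrel σ x]

lemma coe_map_conj_range_lambda (hrel : IsCrossedHom f g) :
    ((lambda G).range.map (MulAut.conj (g.trans (Equiv.inv G))).toMonoidHom : Set (Perm G))
      = {q | ∃ σ, q = cocyclePerm f g σ} := by
  ext q
  simp [conj_lambda_eq_cocyclePerm hrel, eq_comm]

lemma exists_mem_ker_h_f_apply_eq_g_mul (hrel : IsCrossedHom f g)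
    (hh : ∀ σ, h σ = MulAut.conj (g σ) * f σ) (hnorm : HolNormalizes f g) (σ τ : G) :
    ∃ κ ∈ h.ker, f σ τ = g κ * τ := by
  obtain ⟨σ', hσ'⟩ := hnorm _ (lambda_mem_Hol (f σ τ)) σ
  set c := f σ τ * (f σ (f σ τ))⁻¹
  have e (x : G) : c * f σ x * (g σ)⁻¹ = f σ' x * (g σ')⁻¹ := by
    simpa [c, mul_assoc] using congr($hσ' x)
  have hg : g σ' = g σ * c⁻¹ := by
    simpa using (congrArg (·⁻¹) (e 1)).symm
  have hf : f σ' = MulAut.conj c * f σ := by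
    ext x
    rw [← inv_mul_cancel_right (f σ' x) (g σ'), ← e x, hg]
    simp [MulAut.conj_apply]
  have hκ : f σ (g (σ⁻¹ * σ')) = c⁻¹ := by
    rw [← mul_right_inj (g σ), ← hrel, mul_inv_cancel_left, hg]
  refine ⟨σ⁻¹ * σ', ?_, (f σ).injective ?_⟩
  · rw [MonoidHom.mem_ker, map_mul, map_inv, inv_mul_eq_one, hh, hh, hg, hf, ← mul_assoc,
      ← map_mul, inv_mul_cancel_right]
  · rw [map_mul, hκ]
    simp [c]

lemma exists_mem_ker_f_eq_g_mul_h_apply (hrel : IsCrossedHom f g)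
    (hh : ∀ σ, h σ = MulAut.conj (g σ) * f σ) (hnorm : HolNormalizes f g) (σ τ : G) :
    ∃ κ ∈ f.ker, τ = g κ * h σ τ := by
  obtain ⟨σ', hσ'⟩ := hnorm _ (rho_mem_Hol (h σ τ)) σ
  have e (x : G) : f σ x * f σ (h σ τ) * (g σ)⁻¹ * (h σ τ)⁻¹ = f σ' x * (g σ')⁻¹ := by
    simpa using congr($hσ' x)
  have hg : g σ' = h σ τ * g σ * (f σ (h σ τ))⁻¹ := by
    simpa [mul_assoc] using (congrArg (·⁻¹) (e 1)).symm
  have hf : f σ' = f σ := by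
    ext x
    rw [← inv_mul_cancel_right (f σ' x) (g σ'), ← e x, hg]
    group
  have hκ : f σ (g (σ⁻¹ * σ')) = (g σ)⁻¹ * h σ τ * g σ * (f σ (h σ τ))⁻¹ := by
    rw [← mul_right_inj (g σ), ← hrel, mul_inv_cancel_left, hg]
    group
  refine ⟨σ⁻¹ * σ', by rw [MonoidHom.mem_ker, map_mul, map_inv, hf, inv_mul_cancel], ?_⟩
  apply (f σ).injective
  rw [map_mul, hκ, hh]
  simp [MulAut.conj_apply]
  group

lemma h_f_apply (hrel : IsCrossedHom f g) (hh : ∀ σ, h σ = MulAut.conj (g σ) * f σ)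
    (hnorm : HolNormalizes f g) (hgh : Set.MapsTo g h.ker h.ker) (σ τ : G) :
    h (f σ τ) = h τ := by
  obtain ⟨κ, hκ, e⟩ := exists_mem_ker_h_f_apply_eq_g_mul hrel hh hnorm σ τ
  rw [e, map_mul, (hgh hκ : g κ ∈ h.ker), one_mul]

lemma f_h_apply (hrel : IsCrossedHom f g) (hh : ∀ σ, h σ = MulAut.conj (g σ) * f σ)
    (hnorm : HolNormalizes f g) (hgf : Set.MapsTo g f.ker f.ker) (σ τ : G) :
    f (h σ τ) = f τ := by
  obtain ⟨κ, hκ, e⟩ := exists_mem_ker_f_eq_g_mul_h_apply hrel hh hnorm σ τ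
  conv_rhs => rw [e, map_mul, (hgf hκ : g κ ∈ f.ker), one_mul]

lemma f_g_g_mul_of_mem_ker (hrel : IsCrossedHom f g) (hgf : Set.MapsTo g f.ker f.ker) {κ : G}
    (hκ : κ ∈ f.ker) (w : G) : f (g (g κ * w)) = f (g w) := by
  rw [hrel, (hgf hκ : g κ ∈ f.ker), MulAut.one_apply, map_mul,
    (hgf (hgf hκ) : g (g κ) ∈ f.ker), one_mul]

lemma h_g_mul (hrel : IsCrossedHom f g) (hh : ∀ σ, h σ = MulAut.conj (g σ) * f σ)
    (hnorm : HolNormalizes f g) (hgh : Set.MapsTo g h.ker h.ker) (x y : G) :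
    h (g (x * y)) = h (g x) * h (g y) := by
  rw [hrel, map_mul, h_f_apply hrel hh hnorm hgh]

lemma h_g_f_apply (hrel : IsCrossedHom f g) (hh : ∀ σ, h σ = MulAut.conj (g σ) * f σ)
    (hnorm : HolNormalizes f g) (hgh : Set.MapsTo g h.ker h.ker) (σ τ : G) :
    h (g (f σ τ)) = h (g τ) := by
  obtain ⟨κ, hκ, e⟩ := exists_mem_ker_h_f_apply_eq_g_mul hrel hh hnorm σ τ
  rw [e, h_g_mul hrel hh hnorm hgh, (hgh (hgh hκ) : g (g κ) ∈ h.ker), one_mul]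

lemma injective_prod_of_center_eq_bot (hZ : Subgroup.center G = ⊥) (hg1 : g 1 = 1)
    (hh : ∀ σ, h σ = MulAut.conj (g σ) * f σ) : Function.Injective (f.prod h) := by
  refine (injective_iff_map_eq_one _).2 fun x hx => ?_
  obtain ⟨hfx, hhx⟩ := Prod.mk_eq_one.1 hx
  have hconj : MulAut.conj (g x) = 1 := by
    simpa [hfx, hhx] using (hh x).symm
  have hcenter : g x ∈ Subgroup.center G := Subgroup.mem_center_iff.2 fun y => by
    rw [← mul_inv_eq_iff_eq_mul.1 (by simpa using congr($hconj y))]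
  rw [hZ, Subgroup.mem_bot, ← hg1] at hcenter
  exact g.injective hcenter

lemma g_h_apply (hZ : Subgroup.center G = ⊥) (hg1 : g 1 = 1) (hrel : IsCrossedHom f g)
    (hh : ∀ σ, h σ = MulAut.conj (g σ) * f σ) (hnorm : HolNormalizes f g)
    (hgf : Set.MapsTo g f.ker f.ker) (hgh : Set.MapsTo g h.ker h.ker) (σ τ : G) :
    g (h σ τ) = h (g σ) (g τ) := by
  refine injective_prod_of_center_eq_bot hZ hg1 hh (Prod.ext ?_ ?_)
  · obtain ⟨κ, hκ, e⟩ := exists_mem_ker_f_eq_g_mul_h_apply hrel hh hnorm σ τ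
    change f (g (h σ τ)) = f (h (g σ) (g τ))
    rw [f_h_apply hrel hh hnorm hgf, ← f_g_g_mul_of_mem_ker hrel hgf hκ, ← e]
  · let hg : G →* MulAut G := MonoidHom.mk' (fun x => h (g x)) (h_g_mul hrel hh hnorm hgh)
    calc h (g (h σ τ)) = hg (g σ * f σ τ * (g σ)⁻¹) := by simp [hh, hg, MulAut.conj_apply]
      _ = hg (g σ) * hg (f σ τ) * (hg (g σ))⁻¹ := by rw [map_mul, map_mul, map_inv]
      _ = h (g (g σ)) * h (g τ) * (h (g (g σ)))⁻¹ :=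
        congrArg (_ * · * _) (h_g_f_apply hrel hh hnorm hgh σ τ)
      _ = h (h (g σ) (g τ)) := by
        rw [hh (g σ), MulAut.mul_apply, MulAut.conj_apply, map_mul, map_mul, map_inv,
          h_f_apply hrel hh hnorm hgh]

lemma inv_g_mul (hrel : IsCrossedHom f g) (hh : ∀ σ, h σ = MulAut.conj (g σ) * f σ) (a b : G) :
    (g (a * b))⁻¹ = (g a)⁻¹ * h a (g b)⁻¹ := by
  rw [hrel, hh]
  simp [MulAut.conj_apply]
  group

lemma mul_self_mem_Hol (hZ : Subgroup.center G = ⊥) (hg1 : g 1 = 1) (hrel : IsCrossedHom f g)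
    (hh : ∀ σ, h σ = MulAut.conj (g σ) * f σ) (hnorm : HolNormalizes f g)
    (hgf : Set.MapsTo g f.ker f.ker) (hgh : Set.MapsTo g h.ker h.ker) :
    g.trans (Equiv.inv G) * g.trans (Equiv.inv G) ∈ Hol G := by
  have hmul (a b : G) : (g (g (a * b))⁻¹)⁻¹ = (g (g a)⁻¹)⁻¹ * (g (g b)⁻¹)⁻¹ := by
    rw [inv_g_mul hrel hh a b, inv_g_mul hrel hh, g_h_apply hZ hg1 hrel hh hnorm hgf hgh,
      map_inv h, ← map_inv (h (g a)), MulAut.inv_apply_self]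
  exact MulAut.toPerm_mem_Hol (MulEquiv.mk' (g.trans (Equiv.inv G) * g.trans (Equiv.inv G)) hmul)

end CrossedHom

theorem pi_sq_mem_Hol_of_g_preserves_kernels_general
    (G : Type*) [Group G] (hZ : Subgroup.center G = ⊥)
    (f h : G →* MulAut G) (g : Equiv.Perm G) (hg1 : g 1 = 1)
    (hrel : ∀ σ τ : G, g (σ * τ) = g σ * (f σ) (g τ))
    (hh : ∀ σ : G, h σ = MulAut.conj (g σ) * f σ)
    (N : Subgroup (Equiv.Perm G))
    (hN : (N : Set (Equiv.Perm G))
      = {q | ∃ σ : G, q = rho G (g σ) * MulAut.toPerm G (f σ)})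
    (hNnorm : ∀ x ∈ Hol G, ∀ n ∈ N, x * n * x⁻¹ ∈ N)
    (pi : Equiv.Perm G)
    (hpiN : N = Subgroup.map (MulAut.conj pi).toMonoidHom (lambda G).range)
    (hNnormalizer : Subgroup.normalizer (N : Set (Equiv.Perm G)) = Hol G)
    (hgf : ⇑g '' (f.ker : Set G) ⊆ (f.ker : Set G))
    (hgh : ⇑g '' (h.ker : Set G) ⊆ (h.ker : Set G))
    :
    pi ^ 2 ∈ Hol G := by
  set p := g.trans (Equiv.inv G)
  have hnorm : HolNormalizes f g := by
    intro x hx σ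
    have hmem : x * cocyclePerm f g σ * x⁻¹ ∈ (N : Set (Perm G)) :=
      hNnorm x hx _ (by rw [← SetLike.mem_coe, hN]; exact ⟨σ, rfl⟩)
    rwa [hN] at hmem
  have hNp : N = (lambda G).range.map (MulAut.conj p).toMonoidHom :=
    SetLike.coe_injective (hN.trans (coe_map_conj_range_lambda hrel).symm)
  have hc : p⁻¹ * pi ∈ Hol G :=
    Subgroup.inv_mul_mem_normalizer_of_map_conj_eq (hNp.symm.trans hpiN)
  have hc' : pi * p⁻¹ ∈ Hol G := by
    rw [← hNnormalizer, hNp, ← Subgroup.map_equiv_normalizer_eq]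
    exact ⟨p⁻¹ * pi, hc, by simp [MulAut.conj_apply]⟩
  have hp2 : p * p ∈ Hol G := mul_self_mem_Hol hZ hg1 hrel hh hnorm
    (Set.mapsTo_iff_image_subset.2 hgf) (Set.mapsTo_iff_image_subset.2 hgh)
  have hpi : pi ^ 2 = (pi * p⁻¹) * (p * p) * (p⁻¹ * pi) := by rw [sq]; group
  rw [hpi]
  exact mul_mem (mul_mem hc' hp2) hc

/-- In the setup, if moreover `π ∈ Perm(G)` satisfies `N = πλ(G)π⁻¹`,
the normalizer of `N` in `Perm(G)` is `Hol(G)`, and `g(ker f) ⊆ ker f` and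
`g(ker h) ⊆ ker h`, then `π² ∈ Hol(G)`. -/
theorem pi_sq_mem_Hol_of_g_preserves_kernels
    (G : Type*) [Group G] (hZ : Subgroup.center G = ⊥)
    (f h : G →* MulAut G) (g : Equiv.Perm G) (hg1 : g 1 = 1)
    (hrel : ∀ σ τ : G, g (σ * τ) = g σ * (f σ) (g τ))
    (hh : ∀ σ : G, h σ = MulAut.conj (g σ) * f σ)
    (N : Subgroup (Equiv.Perm G))
    (hN : (N : Set (Equiv.Perm G))
      = {q | ∃ σ : G, q = rho G (g σ) * MulAut.toPerm G (f σ)})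
    (hNle : N ≤ Hol G)
    (hNnorm : ∀ x ∈ Hol G, ∀ n ∈ N, x * n * x⁻¹ ∈ N)
    (pi : Equiv.Perm G)
    (hpiN : N = Subgroup.map (MulAut.conj pi).toMonoidHom (lambda G).range)
    (hNnormalizer : Subgroup.normalizer (N : Set (Equiv.Perm G)) = Hol G)
    (hgf : ⇑g '' (f.ker : Set G) ⊆ (f.ker : Set G))
    (hgh : ⇑g '' (h.ker : Set G) ⊆ (h.ker : Set G))
    :
    pi ^ 2 ∈ Hol G :=
  pi_sq_mem_Hol_of_g_preserves_kernels_general G hZ f h g hg1 hrel hh N hN hNnorm pi hpiN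
    hNnormalizer hgf hgh
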